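/- arXiv:1806.09926 — 8 statements merged into one kernel-verified Lean document; each statement's English description precedes it below -/
import Mathlib

section
/- Let G be a group with unique root property in which every non-trivial element is primitively stable, and let x, y ∈ G satisfy x^m = y^n for some positive integers m, n, with x, y non-trivial. Then there exists r ∈ G such that both x and y lie in the cyclic subgroup generated by r. -/
/-- A group has the unique root property if `x ^ n = y ^ n` (for `n ≥ 1`) implies `x = y`. -/
def UniqueRoots (G : Type*) [Group G] : Prop :=
  ∀ x y : G, ∀ n : ℕ, 1 ≤ n → x ^ n = y ^ n → x = y

/-- `IsPlog g k` says that `k = plog_G(g)`, i.e. `k` is the maximal `n ≥ 1` such that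
`g` is an `n`-th power in `G`. -/
def IsPlog {G : Type*} [Group G] (g : G) (k : ℕ) : Prop :=
  1 ≤ k ∧ (∃ s : G, s ^ k = g) ∧ ∀ n : ℕ, 1 ≤ n → (∃ s : G, s ^ n = g) → n ≤ k

/-- A group is primitively stable if every non-trivial element has a primitive logarithm
(hence a primitive root), and `plog(g ^ n) = n * plog(g)` for all `n ≥ 1`. -/
def PrimitivelyStable (G : Type*) [Group G] : Prop :=
  ∀ g : G, g ≠ 1 → (∃ k, IsPlog g k) ∧
    ∀ (n k : ℕ), 1 ≤ n → IsPlog g k → IsPlog (g ^ n) (n * k)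

/-- The radical of `g` in `G`: elements some non-zero power of which lies in `⟨g⟩`. -/
def Rad {G : Type*} [Group G] (g : G) : Set G :=
  {r : G | ∃ a : ℤ, a ≠ 0 ∧ r ^ a ∈ Subgroup.zpowers g}

/-- A subgroup `H ≤ G` is `p`-isolated if `f ^ q ∈ H` implies `f ∈ H` for each prime `q ≠ p`. -/
def PIsolated {G : Type*} [Group G] (p : ℕ) (H : Subgroup G) : Prop :=
  ∀ f : G, ∀ q : ℕ, q.Prime → q ≠ p → f ^ q ∈ H → f ∈ H

/-- `IsPlogIn H g k` says that `k` is the maximal `n ≥ 1` such that `g` is an `n`-th power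
of an element of the subgroup `H`. -/
def IsPlogIn {G : Type*} [Group G] (H : Subgroup G) (g : G) (k : ℕ) : Prop :=
  1 ≤ k ∧ (∃ s ∈ H, s ^ k = g) ∧ ∀ n : ℕ, 1 ≤ n → (∃ s ∈ H, s ^ n = g) → n ≤ k

theorem common_root {G : Type*} [Group G] (hUR : UniqueRoots G)
    (hPS : PrimitivelyStable G) (x y : G) (hx : x ≠ 1) (hy : y ≠ 1)
    (m n : ℕ) (hm : 1 ≤ m) (hn : 1 ≤ n) (h : x ^ m = y ^ n) :
    ∃ r : G, x ∈ Subgroup.zpowers r ∧ y ∈ Subgroup.zpowers r := by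
  obtain ⟨⟨a, ha⟩, hxs⟩ := hPS x hx
  obtain ⟨⟨b, hb⟩, hys⟩ := hPS y hy
  obtain ⟨s, hsmem⟩ := ha.2.1
  obtain ⟨t, htmem⟩ := hb.2.1
  have hxm : IsPlog (x ^ m) (m * a) := hxs m a hm ha
  have hyn : IsPlog (y ^ n) (n * b) := hys n b hn hb
  rw [h] at hxm
  have heq : m * a = n * b :=
    le_antisymm (hyn.2.2 _ hxm.1 hxm.2.1) (hxm.2.2 _ hyn.1 hyn.2.1)
  have hst : s = t := by
    apply hUR s t (m * a) hxm.1
    calc s ^ (m * a) = (s ^ a) ^ m := by rw [← pow_mul, Nat.mul_comm]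
      _ = y ^ n := by rw [hsmem, h]
      _ = (t ^ b) ^ n := by rw [htmem]
      _ = t ^ (m * a) := by rw [← pow_mul, Nat.mul_comm, heq]
  exact ⟨s, ⟨a, by simpa using hsmem⟩, ⟨b, by simp [hst, htmem]⟩⟩
end

section
/- Let G be a group with unique root property in which every non-trivial element is primitively stable, let p be a prime, and let g ∈ G be non-trivial. Then the cyclic subgroup ⟨g⟩ is p-isolated in G if and only if plog_G(g) is a power of p. -/
theorem pIsolated_iff_plog_pow {G : Type*} [Group G] (hUR : UniqueRoots G)
    (hPS : PrimitivelyStable G) (p : ℕ) (hp : p.Prime) (g : G) (hg : g ≠ 1) :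
    PIsolated p (Subgroup.zpowers g) ↔ ∃ e : ℕ, IsPlog g (p ^ e) := by
  have huniq : ∀ {x : G} {a b : ℕ}, IsPlog x a → IsPlog x b → a = b := by
    intro x a b ha hb
    exact le_antisymm (hb.2.2 a ha.1 ha.2.1) (ha.2.2 b hb.1 hb.2.1)
  have hinf : ∀ m : ℤ, g ^ m = 1 → m = 0 := by
    intro m hm
    by_contra h
    have h1 : g ^ (m.natAbs : ℤ) = 1 := by
      rcases Int.natAbs_eq m with he | he
      · rw [← he, hm]
      · rw [← neg_neg ((m.natAbs : ℤ)), zpow_neg, ← he, hm, inv_one]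
    rw [zpow_natCast] at h1
    have : g = 1 := hUR g 1 m.natAbs (by omega) (by simpa using h1)
    exact hg this
  obtain ⟨k, hk⟩ := (hPS g hg).1
  constructor
  · intro hiso
    have hqall : ∀ {q : ℕ}, q.Prime → q ∣ k → q = p := by
      intro q hq hdvd
      by_contra hqp
      obtain ⟨m, hm⟩ := hdvd
      obtain ⟨s, hs⟩ := hk.2.1
      have hf : (s ^ m) ^ q ∈ Subgroup.zpowers g := by
        rw [← pow_mul, mul_comm m q, ← hm, hs]
        exact Subgroup.mem_zpowers g
      obtain ⟨a, ha⟩ := Subgroup.mem_zpowers_iff.mp (hiso (s ^ m) q hq hqp hf)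
      have hgq : g ^ (a * (q : ℤ)) = g := by
        rw [zpow_mul, ha, zpow_natCast, ← pow_mul, mul_comm m q, ← hm, hs]
      have h0 : g ^ (a * (q : ℤ) - 1) = 1 := by
        rw [zpow_sub, hgq, zpow_one, mul_inv_cancel]
      have h1 : a * (q : ℤ) = 1 := by have := hinf _ h0; linarith
      have : IsUnit (q : ℤ) := IsUnit.of_mul_eq_one _ (by linarith [h1])
      rcases Int.isUnit_iff.mp this with h | h <;>
        · have := hq.two_le; omega
    rcases Nat.eq_prime_pow_of_unique_prime_dvd (by have := hk.1; omega : k ≠ 0) hqall with hke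
    exact ⟨_, hke ▸ hk⟩
  · rintro ⟨e, he⟩
    intro f q hq hqp hfq
    rcases eq_or_ne f 1 with rfl | hf
    · exact Subgroup.one_mem _
    have hq1 : 1 ≤ q := hq.one_lt.le
    have key : ∀ f : G, f ≠ 1 → ∀ a' : ℕ, 1 ≤ a' → f ^ q = g ^ a' →
        f ∈ Subgroup.zpowers g := by
      intro f hf a' ha1 hfa
      obtain ⟨m, hm⟩ := (hPS f hf).1
      have h1 : IsPlog (f ^ q) (q * m) := (hPS f hf).2 q m hq1 hm
      have h2 : IsPlog (g ^ a') (a' * p ^ e) := (hPS g hg).2 a' (p ^ e) ha1 he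
      rw [hfa] at h1
      have heq : q * m = a' * p ^ e := huniq h1 h2
      have hqd : q ∣ a' := by
        have hd : q ∣ a' * p ^ e := heq ▸ dvd_mul_right q m
        rcases hq.dvd_mul.mp hd with h | h
        · exact h
        · exact absurd ((Nat.prime_dvd_prime_iff_eq hq hp).mp (hq.dvd_of_dvd_pow h)) hqp
      obtain ⟨b, rfl⟩ := hqd
      have hfb : f = g ^ b := by
        apply hUR f (g ^ b) q hq1
        rw [hfa, ← pow_mul, mul_comm q b]
      exact Subgroup.mem_zpowers_iff.mpr ⟨b, by rw [zpow_natCast, ← hfb]⟩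
    obtain ⟨a, ha⟩ := Subgroup.mem_zpowers_iff.mp hfq
    rcases lt_trichotomy a 0 with hlt | rfl | hgt
    · have hfi : f⁻¹ ^ q = g ^ (-a).toNat := by
        rw [inv_pow, ← ha, ← zpow_natCast, Int.toNat_of_nonneg (by omega), ← zpow_neg]
      have := key f⁻¹ (by simpa using hf) (-a).toNat (by omega) hfi
      simpa using this
    · have : f ^ q = (1 : G) ^ q := by rw [← ha, zpow_zero, one_pow]
      exact absurd (hUR f 1 q hq1 this) hf
    · exact key f hf a.toNat (by omega)
        (by rw [← ha, ← zpow_natCast, Int.toNat_of_nonneg (by omega)])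
end

section
/- Let G be a torsion-free group with unique root property in which every non-trivial element is primitively stable. Then for every non-trivial g ∈ G, the radical Rad_G(g) equals the cyclic subgroup generated by the primitive root of g; in particular Rad_G(g) is an infinite cyclic subgroup of G. -/
theorem radical_eq_zpowers_primitive_root {G : Type*} [Group G]
    (hTF : ∀ x : G, x ≠ 1 → ¬ IsOfFinOrder x) (hUR : UniqueRoots G)
    (hPS : PrimitivelyStable G) (g : G) (hg : g ≠ 1) (k : ℕ) (r : G)
    (hk : IsPlog g k) (hr : r ^ k = g) :
    Rad g = (Subgroup.zpowers r : Set G) ∧ ¬ IsOfFinOrder r := by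
  have hr1 : r ≠ 1 := by
    intro h; apply hg; rw [← hr, h, one_pow]
  -- key: a natural power relation implies membership in zpowers r
  have key : ∀ x : G, ∀ n m : ℕ, 1 ≤ n → x ^ n = g ^ m → x ∈ Subgroup.zpowers r := by
    intro x n m hn hxn
    rcases Nat.eq_zero_or_pos m with hm | hm
    · subst hm
      have : x = 1 := hUR x 1 n hn (by simpa using hxn)
      rw [this]; exact Subgroup.one_mem _
    · have hgm : IsPlog (g ^ m) (m * k) := (hPS g hg).2 m k hm hk
      have hx1 : x ≠ 1 := by
        intro h
        apply hTF g hg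
        exact isOfFinOrder_iff_pow_eq_one.2 ⟨m, hm, by rw [← hxn, h, one_pow]⟩
      obtain ⟨j, hj⟩ := (hPS x hx1).1
      have hxnj : IsPlog (x ^ n) (n * j) := (hPS x hx1).2 n j hn hj
      have h1 : n * j ≤ m * k := by
        obtain ⟨s, hs⟩ := hxnj.2.1
        exact hgm.2.2 (n * j) hxnj.1 ⟨s, by rw [hs, hxn]⟩
      have h2 : m * k ≤ n * j := by
        obtain ⟨s, hs⟩ := hgm.2.1
        exact hxnj.2.2 (m * k) hgm.1 ⟨s, by rw [hs, hxn]⟩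
      have heq : n * j = m * k := le_antisymm h1 h2
      have hpow : (r ^ j) ^ n = x ^ n := by
        rw [← pow_mul, show j * n = k * m by rw [mul_comm j n, heq, mul_comm m k], pow_mul, hr, hxn]
      have := hUR x (r ^ j) n hn hpow.symm
      rw [this]
      exact Subgroup.pow_mem _ (Subgroup.mem_zpowers r) j
  refine ⟨?_, hTF r hr1⟩
  ext x
  simp only [Rad, Set.mem_setOf_eq, SetLike.mem_coe]
  constructor
  · rintro ⟨a, ha, hmem⟩
    rw [Subgroup.mem_zpowers_iff] at hmem
    obtain ⟨m, hm⟩ := hmem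
    -- Normalize the exponent a to its absolute value
    have hn1 : 1 ≤ a.natAbs := by omega
    have habs : x ^ (a.natAbs : ℤ) = g ^ m ∨ x ^ (a.natAbs : ℤ) = g ^ (-m) := by
      rcases Int.natAbs_eq a with h | h
      · left; rw [← h, ← hm]
      · right
        rw [show (a.natAbs : ℤ) = -a by omega, zpow_neg, ← hm, ← zpow_neg]
    have main : ∀ b : ℤ, x ^ (a.natAbs : ℤ) = g ^ b → x ∈ Subgroup.zpowers r := by
      intro b hb
      rcases le_or_gt 0 b with hb0 | hb0
      · apply key x a.natAbs b.toNat hn1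
        have h2 : x ^ ((a.natAbs : ℕ) : ℤ) = g ^ ((b.toNat : ℕ) : ℤ) := by
          rw [hb, Int.toNat_of_nonneg hb0]
        rw [zpow_natCast, zpow_natCast] at h2
        exact h2
      · have hinv : (x⁻¹) ^ (a.natAbs : ℤ) = g ^ (-b) := by
          rw [inv_zpow, hb]; exact (zpow_neg g b).symm
        have : x⁻¹ ∈ Subgroup.zpowers r := by
          apply key x⁻¹ a.natAbs (-b).toNat hn1
          have h2 : (x⁻¹) ^ (a.natAbs : ℤ) = g ^ (((-b).toNat : ℕ) : ℤ) := by
            rw [hinv, Int.toNat_of_nonneg (by omega)]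
          rw [← zpow_natCast x⁻¹, ← zpow_natCast g]; exact h2
        simpa using (Subgroup.zpowers r).inv_mem this
    rcases habs with h | h
    · exact main m h
    · exact main (-m) h
  · rintro hx
    rw [Subgroup.mem_zpowers_iff] at hx
    obtain ⟨t, ht⟩ := hx
    refine ⟨(k : ℤ), by exact_mod_cast Nat.one_le_iff_ne_zero.1 hk.1, ?_⟩
    rw [Subgroup.mem_zpowers_iff]
    refine ⟨t, ?_⟩
    rw [← ht, ← zpow_mul, mul_comm t (k : ℤ), zpow_mul, zpow_natCast, hr]
end

section
/- Let G be a group with unique root property, let R ≤ G be a retract with retraction ρ : G → R, and suppose every non-trivial element of R is primitively stable in R. Then for every g ∈ G with ρ(g) ≠ e, plog_G(g) exists and divides plog_R(ρ(g)). Moreover, if g ∈ R is non-trivial, then plog_R(g) = plog_G(g) and the primitive root of g in G lies in R and equals the primitive root of g in R. -/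
theorem plog_retract {G : Type*} [Group G] (hUR : UniqueRoots G)
    (R : Subgroup G) (ρ : G →* G) (hmem : ∀ x : G, ρ x ∈ R)
    (hid : ∀ r ∈ R, ρ r = r)
    (hPSR : ∀ g ∈ R, g ≠ (1 : G) → (∃ k, IsPlogIn R g k) ∧
      ∀ (n k : ℕ), 1 ≤ n → IsPlogIn R g k → IsPlogIn R (g ^ n) (n * k)) :
    (∀ g : G, ρ g ≠ 1 → ∃ kG : ℕ, IsPlog g kG ∧
        ∀ kR : ℕ, IsPlogIn R (ρ g) kR → kG ∣ kR) ∧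
    (∀ g ∈ R, g ≠ (1 : G) → ∀ kG kR : ℕ, IsPlog g kG → IsPlogIn R g kR →
        kR = kG ∧ ∀ r : G, r ^ kG = g →
          r ∈ R ∧ ∀ r' ∈ R, r' ^ kR = g → r = r') := by
  classical
  have huniq : ∀ {g : G} {k k' : ℕ}, IsPlogIn R g k → IsPlogIn R g k' → k = k' :=
    fun h h' => le_antisymm (h'.2.2 _ h.1 h.2.1) (h.2.2 _ h'.1 h'.2.1)
  constructor
  · intro g hg
    obtain ⟨⟨kR, hkR⟩, -⟩ := hPSR (ρ g) (hmem g) hg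
    have hbound : ∀ n : ℕ, 1 ≤ n → (∃ s : G, s ^ n = g) → n ≤ kR := by
      rintro n hn ⟨s, hs⟩
      exact hkR.2.2 n hn ⟨ρ s, hmem s, by rw [← map_pow, hs]⟩
    set P : ℕ → Prop := fun n => ∃ s : G, s ^ n = g with hP
    have hP1 : P 1 := ⟨g, pow_one g⟩
    have hkR1 : 1 ≤ kR := hkR.1
    set kG := Nat.findGreatest P kR with hkGdef
    have hkG1 : 1 ≤ kG := Nat.le_findGreatest hkR1 hP1
    have hkGP : P kG := Nat.findGreatest_spec hkR1 hP1
    have hmax : ∀ n : ℕ, 1 ≤ n → P n → n ≤ kG := by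
      intro n hn hPn
      by_cases h : n ≤ kR
      · exact Nat.le_findGreatest h hPn
      · exact absurd (hbound n hn hPn) h
    refine ⟨kG, ⟨hkG1, hkGP, hmax⟩, ?_⟩
    intro kR' hkR'
    have hkRR : kR' = kR := huniq hkR' hkR
    obtain ⟨s, hs⟩ := hkGP
    have hρs1 : ρ s ≠ 1 := by
      intro h
      apply hg
      rw [← hs, map_pow, h, one_pow]
    obtain ⟨⟨m, hm⟩, hstab⟩ := hPSR (ρ s) (hmem s) hρs1
    have hkey : IsPlogIn R (ρ g) (kG * m) := by
      have := hstab kG m hkG1 hm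
      rwa [← map_pow, hs] at this
    have : kR = kG * m := huniq hkR hkey
    exact ⟨m, by omega⟩
  · intro g hgR hg1 kG kR hkG hkR
    have hρg : ρ g = g := hid g hgR
    have hle1 : kR ≤ kG := by
      obtain ⟨s, _, hs⟩ := hkR.2.1
      exact hkG.2.2 kR hkR.1 ⟨s, hs⟩
    have hle2 : kG ≤ kR := by
      obtain ⟨s, hs⟩ := hkG.2.1
      exact hkR.2.2 kG hkG.1 ⟨ρ s, hmem s, by rw [← map_pow, hs, hρg]⟩
    have heq : kR = kG := le_antisymm hle1 hle2
    refine ⟨heq, ?_⟩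
    intro r hr
    obtain ⟨s, hsR, hs⟩ := hkR.2.1
    have hrs : r = s := hUR r s kG hkG.1 (by rw [hr, ← hs, heq])
    refine ⟨hrs ▸ hsR, ?_⟩
    intro r' hr'R hr'
    exact hUR r r' kR hkR.1 (by rw [hr', ← hr, heq])
end

section
/- Let G₁, G₂ be groups with unique root property in which every non-trivial element is primitively stable, and let g = (g₁, g₂) ∈ G₁ × G₂ with g₁ ≠ e and g₂ ≠ e. Then plog_{G₁×G₂}(g) = gcd(plog_{G₁}(g₁), plog_{G₂}(g₂)). -/
lemma dvd_of_pow_eq {G : Type*} [Group G] (hPS : PrimitivelyStable G)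
    {g s : G} {n k : ℕ} (hg : g ≠ 1) (hn : 1 ≤ n) (hs : s ^ n = g)
    (hk : IsPlog g k) : n ∣ k := by
  have hs1 : s ≠ 1 := by
    rintro rfl; exact hg (by simpa using hs.symm)
  obtain ⟨m, hm⟩ := (hPS s hs1).1
  have hsnk : IsPlog (s ^ n) (n * m) := (hPS s hs1).2 n m hn hm
  rw [hs] at hsnk
  have h1 : n * m ≤ k := hk.2.2 (n * m) hsnk.1 hsnk.2.1
  have h2 : k ≤ n * m := hsnk.2.2 k hk.1 hk.2.1
  exact ⟨m, by omega⟩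

theorem plog_prod_gcd {G₁ G₂ : Type*} [Group G₁] [Group G₂]
    (hUR₁ : UniqueRoots G₁) (hUR₂ : UniqueRoots G₂)
    (hPS₁ : PrimitivelyStable G₁) (hPS₂ : PrimitivelyStable G₂)
    (g₁ : G₁) (g₂ : G₂) (h₁ : g₁ ≠ 1) (h₂ : g₂ ≠ 1) :
    ∀ k₁ k₂ : ℕ, IsPlog g₁ k₁ → IsPlog g₂ k₂ →
      IsPlog ((g₁, g₂) : G₁ × G₂) (Nat.gcd k₁ k₂) := by
  intro k₁ k₂ hk₁ hk₂
  set d := Nat.gcd k₁ k₂ with hd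
  have hd1 : 1 ≤ d := Nat.one_le_iff_ne_zero.mpr
    (Nat.gcd_ne_zero_left (Nat.one_le_iff_ne_zero.mp hk₁.1))
  refine ⟨hd1, ?_, ?_⟩
  · obtain ⟨t₁, ht₁⟩ := hk₁.2.1
    obtain ⟨t₂, ht₂⟩ := hk₂.2.1
    obtain ⟨c₁, hc₁⟩ := Nat.gcd_dvd_left k₁ k₂
    obtain ⟨c₂, hc₂⟩ := Nat.gcd_dvd_right k₁ k₂
    exact ⟨(t₁ ^ c₁, t₂ ^ c₂), by
      simp only [Prod.pow_mk, Prod.mk.injEq, ← pow_mul]; rw [← hd] at hc₁ hc₂; rw [mul_comm c₁ d, ← hc₁, mul_comm c₂ d, ← hc₂]; exact ⟨ht₁, ht₂⟩⟩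
  · rintro n hn ⟨⟨s₁, s₂⟩, hs⟩
    rw [Prod.ext_iff] at hs
    have d₁ : n ∣ k₁ := dvd_of_pow_eq hPS₁ h₁ hn hs.1 hk₁
    have d₂ : n ∣ k₂ := dvd_of_pow_eq hPS₂ h₂ hn hs.2 hk₂
    exact Nat.le_of_dvd (by omega) (Nat.dvd_gcd d₁ d₂)
end

section
/- The class of groups with unique root property that are primitively stable is closed under direct products: if G₁ and G₂ both have unique roots and are primitively stable, then so is G₁ × G₂. -/
lemma UniqueRoots.torsionfree {G : Type*} [Group G] (h : UniqueRoots G) {s : G} {n : ℕ}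
    (hn : 1 ≤ n) (hs : s ^ n = 1) : s = 1 :=
  h s 1 n hn (by simpa using hs)

lemma isPlog_unique {G : Type*} [Group G] {g : G} {k k' : ℕ}
    (h : IsPlog g k) (h' : IsPlog g k') : k = k' :=
  le_antisymm (h'.2.2 k h.1 h.2.1) (h.2.2 k' h'.1 h'.2.1)

lemma pow_iff_dvd {G : Type*} [Group G] (hPS : PrimitivelyStable G) {g : G} (hg : g ≠ 1)
    {k : ℕ} (hk : IsPlog g k) {n : ℕ} (hn : 1 ≤ n) : (∃ s : G, s ^ n = g) ↔ n ∣ k := by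
  constructor
  · rintro ⟨s, rfl⟩
    have hs : s ≠ 1 := by rintro rfl; simp at hg
    obtain ⟨m, hm⟩ := (hPS s hs).1
    have h2 := (hPS s hs).2 n m hn hm
    exact ⟨m, (isPlog_unique h2 hk).symm⟩
  · rintro ⟨m, rfl⟩
    obtain ⟨r, hr⟩ := hk.2.1
    exact ⟨r ^ m, by rw [← pow_mul, Nat.mul_comm]; exact hr⟩

lemma isPlog_prod {G₁ G₂ : Type*} [Group G₁] [Group G₂]
    (hPS₁ : PrimitivelyStable G₁) (hPS₂ : PrimitivelyStable G₂)
    {g : G₁ × G₂} (h₁ : g.1 ≠ 1) (h₂ : g.2 ≠ 1) {k₁ k₂ : ℕ}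
    (hk₁ : IsPlog g.1 k₁) (hk₂ : IsPlog g.2 k₂) : IsPlog g (Nat.gcd k₁ k₂) := by
  have hpos : 0 < Nat.gcd k₁ k₂ := Nat.gcd_pos_of_pos_left _ hk₁.1
  refine ⟨hpos, ?_, ?_⟩
  · obtain ⟨s₁, hs₁⟩ := (pow_iff_dvd hPS₁ h₁ hk₁ hpos).mpr (Nat.gcd_dvd_left k₁ k₂)
    obtain ⟨s₂, hs₂⟩ := (pow_iff_dvd hPS₂ h₂ hk₂ hpos).mpr (Nat.gcd_dvd_right k₁ k₂)
    exact ⟨(s₁, s₂), Prod.ext (by simpa using hs₁) (by simpa using hs₂)⟩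
  · rintro n hn ⟨s, hs⟩
    have d₁ : n ∣ k₁ := (pow_iff_dvd hPS₁ h₁ hk₁ hn).mp ⟨s.1, by rw [← hs]; rfl⟩
    have d₂ : n ∣ k₂ := (pow_iff_dvd hPS₂ h₂ hk₂ hn).mp ⟨s.2, by rw [← hs]; rfl⟩
    exact Nat.le_of_dvd hpos (Nat.dvd_gcd d₁ d₂)

lemma isPlog_fst {G₁ G₂ : Type*} [Group G₁] [Group G₂] (hUR₂ : UniqueRoots G₂)
    {g : G₁ × G₂} (h₂ : g.2 = 1) {k₁ : ℕ} (hk₁ : IsPlog g.1 k₁) : IsPlog g k₁ := by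
  refine ⟨hk₁.1, ?_, ?_⟩
  · obtain ⟨r, hr⟩ := hk₁.2.1
    exact ⟨(r, 1), Prod.ext (by simpa using hr) (by simpa using h₂.symm)⟩
  · rintro n hn ⟨s, hs⟩
    exact hk₁.2.2 n hn ⟨s.1, by rw [← hs]; rfl⟩

lemma isPlog_snd {G₁ G₂ : Type*} [Group G₁] [Group G₂] (hUR₁ : UniqueRoots G₁)
    {g : G₁ × G₂} (h₁ : g.1 = 1) {k₂ : ℕ} (hk₂ : IsPlog g.2 k₂) : IsPlog g k₂ := by
  refine ⟨hk₂.1, ?_, ?_⟩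
  · obtain ⟨r, hr⟩ := hk₂.2.1
    exact ⟨(1, r), Prod.ext (by simpa using h₁.symm) (by simpa using hr)⟩
  · rintro n hn ⟨s, hs⟩
    exact hk₂.2.2 n hn ⟨s.2, by rw [← hs]; rfl⟩

theorem ups_prod {G₁ G₂ : Type*} [Group G₁] [Group G₂]
    (hUR₁ : UniqueRoots G₁) (hPS₁ : PrimitivelyStable G₁)
    (hUR₂ : UniqueRoots G₂) (hPS₂ : PrimitivelyStable G₂) :
    UniqueRoots (G₁ × G₂) ∧ PrimitivelyStable (G₁ × G₂) := by
  constructor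
  · intro x y n hn h
    exact Prod.ext (hUR₁ x.1 y.1 n hn (by rw [← Prod.pow_fst, ← Prod.pow_fst, h]))
      (hUR₂ x.2 y.2 n hn (by rw [← Prod.pow_snd, ← Prod.pow_snd, h]))
  · intro g hg
    have hg' : g.1 ≠ 1 ∨ g.2 ≠ 1 := by
      by_contra h
      push_neg at h
      exact hg (Prod.ext h.1 h.2)
    rcases eq_or_ne g.1 1 with h₁ | h₁
    · -- g.1 = 1, g.2 ≠ 1
      have h₂ : g.2 ≠ 1 := hg'.resolve_left (not_not_intro h₁)
      obtain ⟨k₂, hk₂⟩ := (hPS₂ g.2 h₂).1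
      refine ⟨⟨k₂, isPlog_snd hUR₁ h₁ hk₂⟩, ?_⟩
      intro n k hn hk
      have hkk : k = k₂ := isPlog_unique hk (isPlog_snd hUR₁ h₁ hk₂)
      rw [hkk]
      have hk2n : IsPlog (g.2 ^ n) (n * k₂) := (hPS₂ g.2 h₂).2 n k₂ hn hk₂
      have : IsPlog (g ^ n) (n * k₂) := isPlog_snd hUR₁ (by simp [h₁]) (by simpa using hk2n)
      exact this
    rcases eq_or_ne g.2 1 with h₂ | h₂
    · -- g.1 ≠ 1, g.2 = 1
      obtain ⟨k₁, hk₁⟩ := (hPS₁ g.1 h₁).1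
      refine ⟨⟨k₁, isPlog_fst hUR₂ h₂ hk₁⟩, ?_⟩
      intro n k hn hk
      have hkk : k = k₁ := isPlog_unique hk (isPlog_fst hUR₂ h₂ hk₁)
      rw [hkk]
      have hk1n : IsPlog (g.1 ^ n) (n * k₁) := (hPS₁ g.1 h₁).2 n k₁ hn hk₁
      exact isPlog_fst hUR₂ (by simp [h₂]) (by simpa using hk1n)
    · -- both nontrivial
      obtain ⟨k₁, hk₁⟩ := (hPS₁ g.1 h₁).1
      obtain ⟨k₂, hk₂⟩ := (hPS₂ g.2 h₂).1
      refine ⟨⟨Nat.gcd k₁ k₂, isPlog_prod hPS₁ hPS₂ h₁ h₂ hk₁ hk₂⟩, ?_⟩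
      intro n k hn hk
      have hkk : k = Nat.gcd k₁ k₂ :=
        isPlog_unique hk (isPlog_prod hPS₁ hPS₂ h₁ h₂ hk₁ hk₂)
      rw [hkk]
      have h₁n : (g ^ n).1 ≠ 1 := fun h =>
        h₁ (hUR₁.torsionfree hn (by simpa using h))
      have h₂n : (g ^ n).2 ≠ 1 := fun h =>
        h₂ (hUR₂.torsionfree hn (by simpa using h))
      have hk1n : IsPlog (g ^ n).1 (n * k₁) := by
        simpa using (hPS₁ g.1 h₁).2 n k₁ hn hk₁
      have hk2n : IsPlog (g ^ n).2 (n * k₂) := by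
        simpa using (hPS₂ g.2 h₂).2 n k₂ hn hk₂
      have := isPlog_prod hPS₁ hPS₂ h₁n h₂n hk1n hk2n
      rwa [Nat.gcd_mul_left] at this
end

section
/- Let G be a free abelian group of finite rank and let C ≤ G be a p-isolated subgroup for a prime p. Then C is closed in the pro-p topology on G, i.e., for every g ∈ G \ C there is a normal subgroup N ≤ G with G/N a finite p-group and g ∉ C + N. -/
open Pointwise
lemma key_torsionfree {M : Type*} [AddCommGroup M] [Module.Finite ℤ M]
    [Module.IsTorsionFree ℤ M] (p : ℕ) (hp : p.Prime) (y : M) (hy : y ≠ 0) :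
    ∃ k : ℕ, ∀ z : M, y ≠ (p : ℤ) ^ k • z := by
  haveI : Module.Free ℤ M := Module.free_of_finite_type_torsion_free'
  let b := Module.Free.chooseBasis ℤ M
  obtain ⟨i, hi⟩ : ∃ i, b.repr y i ≠ 0 := by
    by_contra h
    push_neg at h
    apply hy
    have h0 : b.repr y = 0 := Finsupp.ext h
    simpa using congrArg b.repr.symm h0
  refine ⟨(b.repr y i).natAbs, fun z hz => ?_⟩
  have hdvd : (p : ℤ) ^ (b.repr y i).natAbs ∣ b.repr y i := by
    refine ⟨b.repr z i, ?_⟩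
    conv_lhs => rw [hz]
    simp
  have hdvd' : p ^ (b.repr y i).natAbs ∣ (b.repr y i).natAbs := by
    have h4 := Int.natAbs_dvd_natAbs.mpr hdvd
    rwa [Int.natAbs_pow, Int.natAbs_natCast] at h4
  have h1 : p ^ (b.repr y i).natAbs ≤ (b.repr y i).natAbs :=
    Nat.le_of_dvd (Int.natAbs_pos.mpr hi) hdvd'
  have h2 : (b.repr y i).natAbs < 2 ^ (b.repr y i).natAbs := Nat.lt_two_pow_self
  have h3 : (2:ℕ) ^ (b.repr y i).natAbs ≤ p ^ (b.repr y i).natAbs :=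
    Nat.pow_le_pow_left hp.two_le _
  omega

lemma key_general {Q : Type*} [AddCommGroup Q] [Module.Finite ℤ Q] (p : ℕ) (hp : p.Prime)
    (hQ : ∀ (x : Q) (q : ℕ), q.Prime → q ≠ p → q • x = 0 → x = 0)
    (y : Q) (hy : y ≠ 0) : ∃ k : ℕ, ∀ z : Q, y ≠ (p : ℤ) ^ k • z := by
  set T := Submodule.torsion ℤ Q with hTdef
  haveI : Module.Finite ℤ T := Module.Finite.iff_fg.mpr (IsNoetherian.noetherian T)
  haveI hfin : Finite T := Module.finite_of_fg_torsion _ (Submodule.torsion_isTorsion)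
  haveI hfin' : Finite T.toAddSubgroup := hfin
  set m := Nat.card T.toAddSubgroup with hm
  have hmpos : 0 < m := Nat.card_pos
  -- every torsion element is killed by p ^ m
  have hkill : ∀ t : Q, t ∈ T → (p ^ m : ℕ) • t = 0 := by
    intro t ht
    have hford : IsOfFinAddOrder t := by
      obtain ⟨a, hat⟩ := (Submodule.mem_torsion_iff _).mp ht
      have hat' : (a : ℤ) • t = 0 := hat
      have habs : ((a : ℤ).natAbs : ℤ) • t = 0 := by
        rcases Int.natAbs_eq (a : ℤ) with h | h
        · rw [← h, hat']
        · have h2 : -(a : ℤ) = ((a : ℤ).natAbs : ℤ) := by omega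
          rw [← h2, neg_zsmul, hat', neg_zero]
      rw [natCast_zsmul] at habs
      exact (isOfFinAddOrder_iff_nsmul_eq_zero).mpr
        ⟨(a : ℤ).natAbs, Int.natAbs_pos.mpr (nonZeroDivisors.coe_ne_zero a), habs⟩
    set n := addOrderOf t with hn
    have hpos : 0 < n := hford.addOrderOf_pos
    have hdvdm : n ∣ m := AddSubgroup.addOrderOf_dvd_natCard T.toAddSubgroup ht
    have hprime : ∀ {q : ℕ}, q.Prime → q ∣ n → q = p := by
      intro q hq hqd
      by_contra hqp
      have h1 : q • ((n / q) • t) = 0 := by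
        rw [smul_smul, Nat.mul_div_cancel' hqd, hn, addOrderOf_nsmul_eq_zero]
      have h2 := hQ _ q hq hqp h1
      have h3 : n ∣ n / q := addOrderOf_dvd_of_nsmul_eq_zero h2
      have h4 : n / q < n := Nat.div_lt_self hpos hq.one_lt
      have h5 : 0 < n / q := Nat.div_pos (Nat.le_of_dvd hpos hqd) hq.pos
      exact absurd (Nat.le_of_dvd h5 h3) (by omega)
    have heq : n = p ^ n.primeFactorsList.length :=
      Nat.eq_prime_pow_of_unique_prime_dvd hpos.ne' hprime
    set e := n.primeFactorsList.length with he
    have hle : e ≤ m := by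
      have h6 : n ≤ m := Nat.le_of_dvd hmpos hdvdm
      have h7 : e < 2 ^ e := Nat.lt_two_pow_self
      have h8 : (2:ℕ) ^ e ≤ p ^ e := Nat.pow_le_pow_left hp.two_le _
      omega
    have : n ∣ p ^ m := heq ▸ pow_dvd_pow p hle
    exact addOrderOf_dvd_iff_nsmul_eq_zero.mp this
  have hkillz : ∀ t : Q, t ∈ T → (p : ℤ) ^ m • t = 0 := by
    intro t ht
    have := hkill t ht
    rw [← natCast_zsmul] at this
    rwa [Nat.cast_pow] at this
  by_cases hyT : y ∈ T
  · refine ⟨2 * m, fun z hz => ?_⟩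
    have hzT : z ∈ T := by
      refine (Submodule.mem_torsion_iff _).mpr
        ⟨⟨(p:ℤ) ^ (3 * m), mem_nonZeroDivisors_of_ne_zero
          (pow_ne_zero _ (by exact_mod_cast hp.ne_zero))⟩, ?_⟩
      show (p:ℤ) ^ (3 * m) • z = 0
      have : (p:ℤ) ^ m • y = 0 := hkillz y hyT
      rw [hz, smul_smul, ← pow_add] at this
      rw [show 3 * m = m + 2 * m by ring]
      exact this
    have hz0 : (p:ℤ) ^ m • z = 0 := hkillz z hzT
    apply hy
    rw [hz, show 2 * m = m + m by ring, pow_add, mul_smul, hz0, smul_zero]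
  · obtain ⟨k, hk⟩ := key_torsionfree (M := Q ⧸ T) p hp (T.mkQ y)
      (by simpa [Submodule.Quotient.mk_eq_zero] using hyT)
    refine ⟨k, fun z hz => hk (T.mkQ z) ?_⟩
    rw [hz, map_smul]

theorem free_abelian_p_isolated_closed {G : Type*} [AddCommGroup G]
    [Module.Free ℤ G] [Module.Finite ℤ G] (p : ℕ) (hp : p.Prime)
    (C : AddSubgroup G)
    (hC : ∀ f : G, ∀ q : ℕ, q.Prime → q ≠ p → q • f ∈ C → f ∈ C)
    (g : G) (hg : g ∉ C) :
    ∃ N : AddSubgroup G, Finite (G ⧸ N) ∧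
      (∀ x : G ⧸ N, ∃ k : ℕ, (p ^ k) • x = 0) ∧ g ∉ C ⊔ N := by
  haveI : Module.Finite ℤ (G ⧸ C) :=
    Module.Finite.of_surjective ((QuotientAddGroup.mk' C).toIntLinearMap)
      (QuotientAddGroup.mk'_surjective C)
  have hQ : ∀ (x : G ⧸ C) (q : ℕ), q.Prime → q ≠ p → q • x = 0 → x = 0 := by
    intro x q hq hqp hx
    obtain ⟨f, rfl⟩ := QuotientAddGroup.mk'_surjective C x
    rw [← map_nsmul, QuotientAddGroup.mk'_apply, QuotientAddGroup.eq_zero_iff] at hx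
    rw [QuotientAddGroup.mk'_apply, QuotientAddGroup.eq_zero_iff]
    exact hC f q hq hqp hx
  have hy : (QuotientAddGroup.mk' C g) ≠ 0 := by
    rw [QuotientAddGroup.mk'_apply, Ne, QuotientAddGroup.eq_zero_iff]
    exact hg
  obtain ⟨k, hk⟩ := key_general p hp hQ (QuotientAddGroup.mk' C g) hy
  set N : AddSubgroup G := ((p : ℤ) ^ k • (⊤ : Submodule ℤ G)).toAddSubgroup with hN
  have hmemN : ∀ x : G, x ∈ N ↔ ∃ z : G, (p : ℤ) ^ k • z = x := by
    intro x
    rw [hN, Submodule.mem_toAddSubgroup, ← SetLike.mem_coe, Submodule.coe_pointwise_smul]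
    simp [Set.mem_smul_set, eq_comm]
  have hsm : ∀ x : G, (p ^ k : ℕ) • x = (p : ℤ) ^ k • x := by
    intro x
    rw [← natCast_zsmul, Nat.cast_pow]
  have hkills : ∀ x : G ⧸ N, (p ^ k : ℕ) • x = 0 := by
    intro x
    obtain ⟨f, rfl⟩ := QuotientAddGroup.mk'_surjective N x
    rw [← map_nsmul, QuotientAddGroup.mk'_apply, QuotientAddGroup.eq_zero_iff]
    rw [hmemN]
    exact ⟨f, (hsm f).symm⟩
  refine ⟨N, ?_, fun x => ⟨k, hkills x⟩, ?_⟩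
  · haveI : AddGroup.FG G := Module.Finite.iff_addGroup_fg.mp ‹Module.Finite ℤ G›
    haveI : AddGroup.FG (G ⧸ N) :=
      AddGroup.fg_of_surjective (QuotientAddGroup.mk'_surjective N)
    refine AddCommGroup.finite_of_fg_torsion _ (fun x => ?_)
    exact isOfFinAddOrder_iff_nsmul_eq_zero.mpr
      ⟨p ^ k, pow_pos hp.pos k, hkills x⟩
  · intro hmem
    rw [AddSubgroup.mem_sup] at hmem
    obtain ⟨c, hc, n, hn, hcn⟩ := hmem
    obtain ⟨z, hz⟩ := (hmemN n).mp hn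
    apply hk (QuotientAddGroup.mk' C z)
    rw [← map_zsmul, hz, ← hcn, map_add]
    have hc0 : QuotientAddGroup.mk' C c = 0 := by
      rw [QuotientAddGroup.mk'_apply, QuotientAddGroup.eq_zero_iff]; exact hc
    rw [hc0, zero_add]
end

section
/- Let H ≤ G where G is a group with unique root property in which every non-trivial element is primitively stable. For every non-trivial h ∈ H, letting r = √[G]{h} be the primitive root of h in G and a = [⟨r⟩ : ⟨r⟩ ∩ H], the primitive root of h in H is r^a and plog_H(h) = plog_G(h)/a. Consequently H is itself primitively stable with unique roots. -/
lemma mem_iff_dvd_relindex {G : Type*} [Group G] (H : Subgroup G) (r : G) :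
    ∀ m : ℤ, r ^ m ∈ H ↔ (H.relIndex (Subgroup.zpowers r) : ℤ) ∣ m := by
  classical
  set φ := zpowersHom G r with hφ
  set M := H.comap φ with hM
  have hidx : M.index = H.relIndex (Subgroup.zpowers r) := by
    rw [hM, Subgroup.index_comap, Subgroup.range_zpowersHom]
  set N := Subgroup.toAddSubgroup' M with hN
  obtain ⟨g, hg⟩ := Int.subgroup_cyclic N
  have hNg : N = AddSubgroup.zmultiples g := by
    rw [hg, AddSubgroup.zmultiples_eq_closure]
  have hNidx : N.index = M.index := rfl
  have hidx2 : H.relIndex (Subgroup.zpowers r) = g.natAbs := by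
    rw [← hidx, ← hNidx, hNg, Int.index_zmultiples]
  intro m
  have hmem : r ^ m ∈ H ↔ m ∈ N := Iff.rfl
  rw [hmem, hNg, Int.mem_zmultiples_iff, hidx2]
  exact ⟨fun hd => Int.natAbs_dvd.mpr hd, fun hd => Int.natAbs_dvd.mp hd⟩

lemma isPlogIn_unique {G : Type*} [Group G] {H : Subgroup G} {g : G} {k₁ k₂ : ℕ}
    (h₁ : IsPlogIn H g k₁) (h₂ : IsPlogIn H g k₂) : k₁ = k₂ :=
  le_antisymm (h₂.2.2 _ h₁.1 h₁.2.1) (h₁.2.2 _ h₂.1 h₂.2.1)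

lemma plog_main {G : Type*} [Group G] (hUR : UniqueRoots G)
    (hPS : PrimitivelyStable G) (H : Subgroup G) (h : G) (hh : h ∈ H)
    (h1 : h ≠ 1) (k : ℕ) (r : G) (hk : IsPlog h k) (hr : r ^ k = h)
    (a : ℕ) (ha : a = H.relIndex (Subgroup.zpowers r)) :
    r ^ a ∈ H ∧ a ∣ k ∧ (r ^ a) ^ (k / a) = h ∧ IsPlogIn H h (k / a) := by
  have mem : ∀ m : ℤ, r ^ m ∈ H ↔ (a : ℤ) ∣ m := by
    intro m; rw [ha]; exact mem_iff_dvd_relindex H r m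
  have hrkH : r ^ (k : ℤ) ∈ H := by rw [zpow_natCast, hr]; exact hh
  have hakZ : (a : ℤ) ∣ (k : ℤ) := (mem k).mp hrkH
  have hak : a ∣ k := Int.ofNat_dvd.mp hakZ
  have ha0 : a ≠ 0 := by
    rintro rfl
    simp only [Nat.cast_zero, zero_dvd_iff, Nat.cast_eq_zero] at hakZ
    exact absurd (hakZ ▸ hk.1) (by norm_num)
  have hk1 : 1 ≤ k := hk.1
  have hraH : r ^ a ∈ H := by
    have : r ^ (a : ℤ) ∈ H := (mem a).mpr dvd_rfl
    rwa [zpow_natCast] at this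
  have hka : a * (k / a) = k := Nat.mul_div_cancel' hak
  have hpow : (r ^ a) ^ (k / a) = h := by rw [← pow_mul, hka, hr]
  have hk_div : 1 ≤ k / a :=
    (Nat.one_le_div_iff (Nat.pos_of_ne_zero ha0)).mpr (Nat.le_of_dvd hk1 hak)
  refine ⟨hraH, hak, hpow, hk_div, ⟨r ^ a, hraH, hpow⟩, ?_⟩
  intro n hn ⟨s, hsH, hsn⟩
  have hs1 : s ≠ 1 := by
    rintro rfl; rw [one_pow] at hsn; exact h1 hsn.symm
  obtain ⟨⟨m, hm⟩, hmul⟩ := hPS s hs1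
  have hsm : IsPlog (s ^ n) (n * m) := hmul n m hn hm
  rw [hsn] at hsm
  have hnm : n * m = k := le_antisymm (hk.2.2 _ hsm.1 hsm.2.1) (hsm.2.2 _ hk.1 hk.2.1)
  have hsrm : s = r ^ m := by
    apply hUR s (r ^ m) n hn
    rw [← pow_mul, Nat.mul_comm m n, hnm, hr, hsn]
  have hrmH : r ^ (m : ℤ) ∈ H := by rw [zpow_natCast, ← hsrm]; exact hsH
  have ham : a ∣ m := Int.ofNat_dvd.mp ((mem m).mp hrmH)
  have hm1 : 1 ≤ m := hm.1
  calc n = n * 1 := (Nat.mul_one n).symm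
    _ ≤ n * (m / a) := Nat.mul_le_mul_left n
        ((Nat.one_le_div_iff (Nat.pos_of_ne_zero ha0)).mpr (Nat.le_of_dvd hm1 ham))
    _ = (n * m) / a := (Nat.mul_div_assoc n ham).symm
    _ = k / a := by rw [hnm]

theorem plog_subgroup {G : Type*} [Group G] (hUR : UniqueRoots G)
    (hPS : PrimitivelyStable G) (H : Subgroup G) (h : G) (hh : h ∈ H)
    (h1 : h ≠ 1) (k : ℕ) (r : G) (hk : IsPlog h k) (hr : r ^ k = h)
    (a : ℕ) (ha : a = H.relIndex (Subgroup.zpowers r)) :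
    r ^ a ∈ H ∧ a ∣ k ∧ (r ^ a) ^ (k / a) = h ∧ IsPlogIn H h (k / a) ∧
    UniqueRoots H ∧
    (∀ h' ∈ H, h' ≠ (1 : G) → (∃ k', IsPlogIn H h' k') ∧
      ∀ (n k' : ℕ), 1 ≤ n → IsPlogIn H h' k' → IsPlogIn H (h' ^ n) (n * k')) := by
  obtain ⟨c1, c2, c3, c4⟩ := plog_main hUR hPS H h hh h1 k r hk hr a ha
  refine ⟨c1, c2, c3, c4, ?_, ?_⟩
  · intro x y n hn hxy
    ext
    apply hUR (x : G) (y : G) n hn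
    exact_mod_cast congrArg (Subtype.val) hxy
  · intro h' hh' h1'
    obtain ⟨⟨k₀, hk₀⟩, _⟩ := hPS h' h1'
    obtain ⟨r₀, hr₀⟩ := hk₀.2.1
    set a₀ := H.relIndex (Subgroup.zpowers r₀) with ha₀
    obtain ⟨d1, d2, d3, d4⟩ := plog_main hUR hPS H h' hh' h1' k₀ r₀ hk₀ hr₀ a₀ ha₀
    refine ⟨⟨k₀ / a₀, d4⟩, ?_⟩
    intro n k' hn hk'
    have hk'eq : k' = k₀ / a₀ := isPlogIn_unique hk' d4
    have hpn : IsPlog (h' ^ n) (n * k₀) := (hPS h' h1').2 n k₀ hn hk₀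
    have hrpn : r₀ ^ (n * k₀) = h' ^ n := by rw [Nat.mul_comm, pow_mul, hr₀]
    have hpn1 : h' ^ n ≠ 1 := by
      intro he
      exact h1' (hUR h' 1 n hn (by rw [he, one_pow]))
    obtain ⟨e1, e2, e3, e4⟩ :=
      plog_main hUR hPS H (h' ^ n) (pow_mem hh' n) hpn1 (n * k₀) r₀ hpn hrpn a₀ ha₀
    have : n * k₀ / a₀ = n * k' := by
      rw [hk'eq, Nat.mul_div_assoc n d2]
    rwa [this] at e4
end
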